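/- Fix a radial function φ on (0,1] of the form φ(r) = sin(πn₂ r) sin(πn₃ r) / r², where n₂, n₃ are positive integers. Then for all positive integers a with a ≠ 0, |∫₀¹ cos(aπr) φ(r) dr| ≤ C ‖φ'‖_{L^∞} / a², and consequently, if n, n₁ ≤ some N' and n₂ ∼ N₂', n₃ ∼ N₃' with N' > 4N₁' and n ∼ N', n₁ ≤ N₁', then |∫₀¹ sin(nπr) sin(n₁πr) φ(r) dr| ≤ C (N₂')² N₃' / (N')². -/

import Mathlib

/-!
By product-to-sum, `∫₀¹ cos(Ar) sin(Br) sin(Cr) / r² dr` is a quarter of the signed sum of the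
four values `c ∫₀¹ (cos(cr) - 1)/r² dr = c H(c)` at `c = A ± B ± C`, where
`H(x) = ∫₀ˣ (cos t - 1)/t² dt`. Two integrations by parts give `c H(c) = 1 + K|c| + O(c⁻²)` at
the nonzero multiples of `π`, with `K = H(∞)`. For `A = aπ`, `B = n₂π`, `C = n₃π` and
`a > n₂ + n₃` the linear terms cancel, leaving `O((a - n₂ - n₃)⁻²)`; otherwise the sum is `O(n₃)`.
Both are `≲ n₂² n₃ / a²` when `n₃ ≤ n₂`, and `‖φ'‖_∞ ≳ n₂² n₃`, as the value of `φ'` at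
`1 / (2n₂)` shows. Part (b) follows from `sin x sin y = (cos (x - y) - cos (x + y)) / 2`, since
`n - n₁ ≥ 3N'/4`.
-/

open Real intervalIntegral MeasureTheory Set

theorem abs_cos_mul_sub_one_div_sq_le (c r : ℝ) : |(cos (c * r) - 1) / r ^ 2| ≤ c ^ 2 / 2 := by
  rcases eq_or_ne r 0 with rfl | hr
  · rw [zero_pow two_ne_zero, div_zero, abs_zero]
    positivity
  rw [abs_div, abs_of_nonneg (by positivity : (0 : ℝ) ≤ r ^ 2), div_le_iff₀ (by positivity),
    abs_sub_comm, abs_of_nonneg (by linarith [cos_le_one (c * r)])]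
  linarith [one_sub_sq_div_two_le_cos (x := c * r)]

theorem intervalIntegrable_cos_mul_sub_one_div_sq (c a b : ℝ) :
    IntervalIntegrable (fun r => (cos (c * r) - 1) / r ^ 2) volume a b := by
  have hm : Measurable fun r : ℝ => (cos (c * r) - 1) / r ^ 2 := by fun_prop
  exact (intervalIntegrable_const (c := c ^ 2 / 2)).mono_fun' hm.aestronglyMeasurable
    (ae_of_all _ fun r => abs_cos_mul_sub_one_div_sq_le c r)

noncomputable def cosSubOneIntegral (x : ℝ) : ℝ := ∫ t in (0 : ℝ)..x, (cos t - 1) / t ^ 2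

theorem intervalIntegrable_cos_sub_one_div_sq (a b : ℝ) :
    IntervalIntegrable (fun t => (cos t - 1) / t ^ 2) volume a b := by
  simpa using intervalIntegrable_cos_mul_sub_one_div_sq 1 a b

theorem cosSubOneIntegral_neg (x : ℝ) : cosSubOneIntegral (-x) = -cosSubOneIntegral x := by
  have h := integral_comp_neg (a := 0) (b := x) fun t => (cos t - 1) / t ^ 2
  simp only [cos_neg, even_two, Even.neg_pow, neg_zero] at h
  rw [cosSubOneIntegral, cosSubOneIntegral, h]
  exact integral_symm _ _

theorem integral_cos_mul_sub_one_div_sq (c : ℝ) :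
    ∫ r in (0 : ℝ)..1, (cos (c * r) - 1) / r ^ 2 = c * cosSubOneIntegral c := by
  rcases eq_or_ne c 0 with rfl | hc
  · simp
  have h : ∀ r : ℝ, (cos (c * r) - 1) / r ^ 2 = c ^ 2 * ((cos (c * r) - 1) / (c * r) ^ 2) := by
    intro r
    rcases eq_or_ne r 0 with rfl | hr
    · simp
    · field_simp
  simp_rw [h]
  rw [intervalIntegral.integral_const_mul, integral_comp_mul_left (fun t => (cos t - 1) / t ^ 2) hc,
    mul_zero, mul_one, smul_eq_mul, cosSubOneIntegral]
  field_simp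

theorem hasDerivAt_inv_add_sin_div_sq_sub_cos_div_cube {t : ℝ} (ht : t ≠ 0) :
    HasDerivAt (fun t => 1 / t + sin t / t ^ 2 - 2 * cos t / t ^ 3)
      ((cos t - 1) / t ^ 2 + 6 * (cos t / t ^ 4)) t := by
  have h₁ : HasDerivAt (fun t : ℝ => 1 / t) (-(t ^ 2)⁻¹) t := by
    simpa only [one_div] using hasDerivAt_inv ht
  have h₂ := (hasDerivAt_sin t).fun_div (hasDerivAt_pow 2 t) (pow_ne_zero 2 ht)
  have h₃ := ((hasDerivAt_cos t).const_mul 2).fun_div (hasDerivAt_pow 3 t) (pow_ne_zero 3 ht)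
  refine ((h₁.fun_add h₂).fun_sub h₃).congr_deriv ?_
  field_simp
  ring

theorem cos_div_pow_four_le_rpow {t : ℝ} (ht : 0 < t) : ‖cos t / t ^ 4‖ ≤ t ^ (-4 : ℝ) := by
  rw [rpow_neg ht.le, norm_div, norm_pow, Real.norm_of_nonneg ht.le, div_eq_mul_inv]
  norm_cast
  exact mul_le_of_le_one_left (by positivity) (abs_cos_le_one t)

theorem integrableOn_cos_div_pow_four_Ioi {x : ℝ} (hx : 0 < x) :
    IntegrableOn (fun t => cos t / t ^ 4) (Ioi x) :=
  (integrableOn_Ioi_rpow_of_lt (by norm_num) hx).mono'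
    (by fun_prop : Measurable fun t : ℝ => cos t / t ^ 4).aestronglyMeasurable
    ((ae_restrict_mem measurableSet_Ioi).mono fun _ ht => cos_div_pow_four_le_rpow (hx.trans ht))

noncomputable def cosDivPowFourTail (x : ℝ) : ℝ := ∫ t in Ioi x, cos t / t ^ 4

theorem abs_cosDivPowFourTail_le {x : ℝ} (hx : 0 < x) :
    |cosDivPowFourTail x| ≤ 1 / (3 * x ^ 3) := by
  have h := norm_integral_le_of_norm_le
    (integrableOn_Ioi_rpow_of_lt (by norm_num : (-4 : ℝ) < -1) hx)
    ((ae_restrict_mem measurableSet_Ioi).mono fun _ ht => cos_div_pow_four_le_rpow (hx.trans ht))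
  rw [integral_Ioi_rpow_of_lt (by norm_num) hx, show (-4 : ℝ) + 1 = -(3 : ℕ) by norm_num,
    rpow_neg hx.le, rpow_natCast] at h
  rw [cosDivPowFourTail, ← norm_eq_abs]
  convert h using 1
  field_simp
  norm_num

theorem intervalIntegral_add_cosDivPowFourTail {x y : ℝ} (hx : 0 < x) (hxy : x ≤ y) :
    (∫ t in x..y, cos t / t ^ 4) + cosDivPowFourTail y = cosDivPowFourTail x := by
  rw [integral_of_le hxy, cosDivPowFourTail, cosDivPowFourTail,
    ← setIntegral_union Ioc_disjoint_Ioi_same measurableSet_Ioi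
      ((integrableOn_cos_div_pow_four_Ioi hx).mono_set Ioc_subset_Ioi_self)
      (integrableOn_cos_div_pow_four_Ioi (hx.trans_le hxy)), Ioc_union_Ioi_eq_Ioi hxy]

/-- `∫₀^∞ (cos t - 1) / t² dt`, read off from the value at `π` through the expansion
`cosSubOneIntegral_eq_limit_add`. It equals `-π / 2`, but only a bound is needed. -/
noncomputable def cosSubOneIntegralLimit : ℝ :=
  cosSubOneIntegral π - (1 / π + sin π / π ^ 2 - 2 * cos π / π ^ 3) - 6 * cosDivPowFourTail π

theorem cosSubOneIntegral_eq_limit_add {x : ℝ} (hx : π ≤ x) :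
    cosSubOneIntegral x = cosSubOneIntegralLimit + (1 / x + sin x / x ^ 2 - 2 * cos x / x ^ 3)
      + 6 * cosDivPowFourTail x := by
  have hpos : ∀ t ∈ uIcc π x, 0 < t := fun t ht =>
    pi_pos.trans_le (by rw [uIcc_of_le hx] at ht; exact ht.1)
  have hcos : IntervalIntegrable (fun t => cos t / t ^ 4) volume π x :=
    (continuousOn_cos.div (by fun_prop) fun t ht => (pow_pos (hpos t ht) 4).ne').intervalIntegrable
  have hftc := integral_eq_sub_of_hasDerivAt
    (fun t ht => hasDerivAt_inv_add_sin_div_sq_sub_cos_div_cube (hpos t ht).ne')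
    ((intervalIntegrable_cos_sub_one_div_sq π x).add (hcos.const_mul 6))
  rw [integral_add (intervalIntegrable_cos_sub_one_div_sq π x) (hcos.const_mul 6),
    intervalIntegral.integral_const_mul] at hftc
  have hH := integral_add_adjacent_intervals (intervalIntegrable_cos_sub_one_div_sq 0 π)
    (intervalIntegrable_cos_sub_one_div_sq π x)
  have hT := intervalIntegral_add_cosDivPowFourTail pi_pos hx
  rw [cosSubOneIntegralLimit, cosSubOneIntegral, cosSubOneIntegral]
  linarith

theorem abs_mul_cosSubOneIntegral_sub_le_of_pi_le {x : ℝ} (hx : π ≤ x) (hs : sin x = 0) :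
    |x * cosSubOneIntegral x - (1 + cosSubOneIntegralLimit * x)| ≤ 4 / x ^ 2 := by
  have hx0 : 0 < x := pi_pos.trans_le hx
  have hT := abs_cosDivPowFourTail_le hx0
  have heq : x * cosSubOneIntegral x - (1 + cosSubOneIntegralLimit * x)
      = -(2 * cos x / x ^ 2) + 6 * x * cosDivPowFourTail x := by
    rw [cosSubOneIntegral_eq_limit_add hx, hs]
    field_simp
    ring
  have hcos : |2 * cos x / x ^ 2| ≤ 2 / x ^ 2 := by
    rw [abs_div, abs_mul, abs_two, abs_of_pos (by positivity : 0 < x ^ 2)]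
    gcongr
    linarith [abs_cos_le_one x]
  have htail : |6 * x * cosDivPowFourTail x| ≤ 2 / x ^ 2 := by
    rw [abs_mul, abs_of_pos (by positivity : 0 < 6 * x)]
    calc 6 * x * |cosDivPowFourTail x| ≤ 6 * x * (1 / (3 * x ^ 3)) := by gcongr
      _ = 2 / x ^ 2 := by field_simp; ring
  rw [heq]
  calc _ ≤ |-(2 * cos x / x ^ 2)| + |6 * x * cosDivPowFourTail x| := abs_add_le _ _
    _ ≤ 2 / x ^ 2 + 2 / x ^ 2 := by rw [abs_neg]; exact add_le_add hcos htail
    _ = 4 / x ^ 2 := by ring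

theorem abs_mul_cosSubOneIntegral_sub_le {x : ℝ} (hx : π ≤ |x|) (hs : sin x = 0) :
    |x * cosSubOneIntegral x - (1 + cosSubOneIntegralLimit * |x|)| ≤ 4 / x ^ 2 := by
  rcases le_or_gt 0 x with h | h
  · rw [abs_of_nonneg h] at hx ⊢
    exact abs_mul_cosSubOneIntegral_sub_le_of_pi_le hx hs
  · rw [abs_of_neg h] at hx ⊢
    simpa [cosSubOneIntegral_neg, hs] using abs_mul_cosSubOneIntegral_sub_le_of_pi_le hx

theorem abs_mul_cosSubOneIntegral_sub_le_one {x : ℝ} (hs : sin x = 0) :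
    |x * cosSubOneIntegral x - (1 + cosSubOneIntegralLimit * |x|)| ≤ 1 := by
  rcases eq_or_ne x 0 with rfl | hx
  · simp
  obtain ⟨m, rfl⟩ := sin_eq_zero_iff.mp hs
  have hm : (1 : ℝ) ≤ |(m : ℝ)| := by
    rw [← Int.cast_abs]
    exact_mod_cast Int.one_le_abs (by rintro rfl; simp at hx)
  have hπ : π ≤ |m * π| := by
    rw [abs_mul, abs_of_pos pi_pos]
    nlinarith [pi_pos]
  refine (abs_mul_cosSubOneIntegral_sub_le hπ hs).trans ?_
  rw [div_le_one (by positivity), ← sq_abs]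
  nlinarith [pi_gt_three]

theorem abs_cosSubOneIntegral_le (x : ℝ) : |cosSubOneIntegral x| ≤ |x| / 2 := by
  have h := norm_integral_le_of_norm_le_const (a := 0) (b := x) (C := 1 / 2)
    (f := fun t => (cos t - 1) / t ^ 2) fun t _ => by
      simpa only [one_mul, one_pow, Real.norm_eq_abs] using abs_cos_mul_sub_one_div_sq_le 1 t
  rw [Real.norm_eq_abs, sub_zero] at h
  rw [cosSubOneIntegral]
  linarith

theorem abs_cosSubOneIntegralLimit_le : |cosSubOneIntegralLimit| ≤ 4 := by
  have hH := abs_cosSubOneIntegral_le π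
  have hT := abs_cosDivPowFourTail_le pi_pos
  have hπ := pi_gt_three
  have hπ' := pi_lt_d2
  have h₁ : 1 / π ≤ 1 / 3 := by gcongr
  have h₂ : 1 / π ^ 3 ≤ 1 / 27 := by
    have := pow_le_pow_left₀ (by norm_num) hπ.le 3
    rw [div_le_div_iff₀ (by positivity) (by norm_num)]
    linarith
  have h₃ : 0 < 1 / π := by positivity
  rw [abs_of_pos pi_pos] at hH
  rw [show 1 / (3 * π ^ 3) = 1 / π ^ 3 / 3 by ring] at hT
  rw [cosSubOneIntegralLimit, sin_pi, cos_pi,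
    show 1 / π + 0 / π ^ 2 - 2 * -1 / π ^ 3 = 1 / π + 2 * (1 / π ^ 3) by ring]
  rw [abs_le] at *
  constructor <;> linarith

noncomputable def sinMulSinDivSq (b c : ℝ) : ℝ → ℝ := fun r => sin (b * r) * sin (c * r) / r ^ 2

theorem sinMulSinDivSq_comm (b c : ℝ) : sinMulSinDivSq b c = sinMulSinDivSq c b := by
  ext r
  simp only [sinMulSinDivSq, mul_comm (sin (b * r))]

theorem cos_mul_sinMulSinDivSq (A B C r : ℝ) :
    cos (A * r) * sinMulSinDivSq B C r =
      ((cos ((A + B - C) * r) - 1) / r ^ 2 + (cos ((A - B + C) * r) - 1) / r ^ 2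
        - (cos ((A + B + C) * r) - 1) / r ^ 2 - (cos ((A - B - C) * r) - 1) / r ^ 2) / 4 := by
  simp only [sinMulSinDivSq, add_mul, sub_mul, cos_add, cos_sub, sin_add, sin_sub]
  ring

theorem intervalIntegrable_cos_mul_sinMulSinDivSq (A B C : ℝ) :
    IntervalIntegrable (fun r => cos (A * r) * sinMulSinDivSq B C r) volume 0 1 := by
  simp_rw [cos_mul_sinMulSinDivSq]
  exact ((((intervalIntegrable_cos_mul_sub_one_div_sq _ 0 1).add
    (intervalIntegrable_cos_mul_sub_one_div_sq _ 0 1)).sub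
    (intervalIntegrable_cos_mul_sub_one_div_sq _ 0 1)).sub
    (intervalIntegrable_cos_mul_sub_one_div_sq _ 0 1)).div_const 4

theorem integral_cos_mul_sinMulSinDivSq (A B C : ℝ) :
    ∫ r in (0 : ℝ)..1, cos (A * r) * sinMulSinDivSq B C r =
      ((A + B - C) * cosSubOneIntegral (A + B - C) + (A - B + C) * cosSubOneIntegral (A - B + C)
        - (A + B + C) * cosSubOneIntegral (A + B + C)
        - (A - B - C) * cosSubOneIntegral (A - B - C)) / 4 := by
  have hi := fun c : ℝ => intervalIntegrable_cos_mul_sub_one_div_sq c 0 1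
  simp_rw [cos_mul_sinMulSinDivSq]
  rw [intervalIntegral.integral_div, integral_sub ((hi _).add (hi _) |>.sub (hi _)) (hi _),
    integral_sub ((hi _).add (hi _)) (hi _), integral_add (hi _) (hi _)]
  simp only [integral_cos_mul_sub_one_div_sq]

section

variable {A B C : ℝ}

theorem sin_add_sub_eq_zero_of_sin_eq_zero (hA : sin A = 0) (hB : sin B = 0) (hC : sin C = 0) :
    sin (A + B - C) = 0 ∧ sin (A - B + C) = 0 ∧ sin (A + B + C) = 0 ∧ sin (A - B - C) = 0 := by
  simp [sin_add, sin_sub, hA, hB, hC]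

theorem abs_integral_cos_mul_sinMulSinDivSq_le (hA : sin A = 0) (hB : sin B = 0)
    (hC : sin C = 0) :
    |∫ r in (0 : ℝ)..1, cos (A * r) * sinMulSinDivSq B C r| ≤ 4 * |C| + 1 := by
  obtain ⟨h₁, h₂, h₃, h₄⟩ := sin_add_sub_eq_zero_of_sin_eq_zero hA hB hC
  set K := cosSubOneIntegralLimit
  have hK := abs_cosSubOneIntegralLimit_le
  have hD : |(|A + B - C| - |A + B + C|) + (|A - B + C| - |A - B - C|)| ≤ 4 * |C| := by
    have h₁₃ := abs_abs_sub_abs_le_abs_sub (A + B - C) (A + B + C)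
    have h₂₄ := abs_abs_sub_abs_le_abs_sub (A - B + C) (A - B - C)
    rw [show A + B - C - (A + B + C) = -(2 * C) by ring, abs_neg, abs_mul, abs_two] at h₁₃
    rw [show A - B + C - (A - B - C) = 2 * C by ring, abs_mul, abs_two] at h₂₄
    exact (abs_add_le _ _).trans (by linarith)
  have hKD : |K * ((|A + B - C| - |A + B + C|) + (|A - B + C| - |A - B - C|))| ≤ 4 * (4 * |C|) := by
    rw [abs_mul]
    gcongr
  have e₁ := abs_mul_cosSubOneIntegral_sub_le_one h₁
  have e₂ := abs_mul_cosSubOneIntegral_sub_le_one h₂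
  have e₃ := abs_mul_cosSubOneIntegral_sub_le_one h₃
  have e₄ := abs_mul_cosSubOneIntegral_sub_le_one h₄
  rw [integral_cos_mul_sinMulSinDivSq]
  rw [abs_le] at *
  constructor <;> linarith

theorem abs_integral_cos_mul_sinMulSinDivSq_le_of_pi_le (hA : sin A = 0) (hB : sin B = 0)
    (hC : sin C = 0) (hB₀ : 0 ≤ B) (hC₀ : 0 ≤ C) (hπ : π ≤ A - B - C) :
    |∫ r in (0 : ℝ)..1, cos (A * r) * sinMulSinDivSq B C r| ≤ 4 / (A - B - C) ^ 2 := by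
  obtain ⟨h₁, h₂, h₃, h₄⟩ := sin_add_sub_eq_zero_of_sin_eq_zero hA hB hC
  have hpos : 0 < A - B - C := pi_pos.trans_le hπ
  have bound : ∀ x, A - B - C ≤ x → sin x = 0 →
      |x * cosSubOneIntegral x - (1 + cosSubOneIntegralLimit * x)| ≤ 4 / (A - B - C) ^ 2 := by
    intro x hx hs
    calc _ ≤ 4 / x ^ 2 := abs_mul_cosSubOneIntegral_sub_le_of_pi_le (hπ.trans hx) hs
      _ ≤ 4 / (A - B - C) ^ 2 := by gcongr
  have e₁ := bound _ (by linarith) h₁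
  have e₂ := bound _ (by linarith) h₂
  have e₃ := bound _ (by linarith) h₃
  have e₄ := bound _ le_rfl h₄
  rw [integral_cos_mul_sinMulSinDivSq]
  rw [abs_le] at *
  constructor <;> linarith

end

theorem abs_integral_cos_nat_mul_pi_le_of_le {a n₂ n₃ : ℕ} (ha : 1 ≤ a) (h₃ : 1 ≤ n₃)
    (h : n₃ ≤ n₂) :
    |∫ r in (0 : ℝ)..1, cos (a * π * r) * sinMulSinDivSq (π * n₂) (π * n₃) r|
      ≤ 60 * n₂ ^ 2 * n₃ / a ^ 2 := by
  have hA : sin (a * π) = 0 := sin_nat_mul_pi a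
  have hB : sin (π * n₂) = 0 := by rw [mul_comm]; exact sin_nat_mul_pi n₂
  have hC : sin (π * n₃) = 0 := by rw [mul_comm]; exact sin_nat_mul_pi n₃
  have h₃' : (1 : ℝ) ≤ n₃ := by exact_mod_cast h₃
  have h' : (n₃ : ℝ) ≤ n₂ := by exact_mod_cast h
  have hπ := pi_lt_d2
  rcases le_or_gt a (n₂ + n₃) with hres | hnonres
  · have haN : (a : ℝ) ≤ 2 * n₂ := by
      have : (a : ℝ) ≤ n₂ + n₃ := by exact_mod_cast hres
      linarith
    have hlin : 4 * (π * n₃) + 1 ≤ 14 * n₃ := by nlinarith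
    have hsq : (a : ℝ) ^ 2 ≤ 4 * n₂ ^ 2 := by nlinarith
    calc _ ≤ 4 * |π * n₃| + 1 := abs_integral_cos_mul_sinMulSinDivSq_le hA hB hC
      _ ≤ 60 * n₂ ^ 2 * n₃ / a ^ 2 := by
        rw [abs_of_nonneg (by positivity), le_div_iff₀ (by positivity)]
        nlinarith [mul_le_mul hlin hsq (by positivity) (by positivity)]
  · set q : ℝ := a - n₂ - n₃
    have hq : 1 ≤ q := by
      have : (n₂ : ℝ) + n₃ + 1 ≤ a := by exact_mod_cast hnonres
      linarith
    have hgap : a * π - π * n₂ - π * n₃ = π * q := by ring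
    have haq : (a : ℝ) ≤ 3 * n₂ * q := by nlinarith
    calc _ ≤ 4 / (a * π - π * n₂ - π * n₃) ^ 2 :=
          abs_integral_cos_mul_sinMulSinDivSq_le_of_pi_le hA hB hC (by positivity)
            (by positivity) (by rw [hgap]; nlinarith [pi_pos])
      _ ≤ 60 * n₂ ^ 2 * n₃ / a ^ 2 := by
        rw [hgap, div_le_div_iff₀ (by positivity) (by positivity)]
        have hπ3 := pi_gt_three
        have hsq : (a : ℝ) ^ 2 ≤ 9 * n₂ ^ 2 * q ^ 2 := by nlinarith
        nlinarith [mul_le_mul_of_nonneg_left h₃' (by positivity : (0 : ℝ) ≤ n₂ ^ 2 * q ^ 2),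
          mul_le_mul_of_nonneg_left (by nlinarith : (9 : ℝ) ≤ π ^ 2)
            (by positivity : (0 : ℝ) ≤ n₂ ^ 2 * n₃ * q ^ 2)]

theorem abs_integral_cos_nat_mul_pi_le {a n₂ n₃ : ℕ} (ha : 1 ≤ a) (h₂ : 1 ≤ n₂) (h₃ : 1 ≤ n₃) :
    |∫ r in (0 : ℝ)..1, cos (a * π * r) * sinMulSinDivSq (π * n₂) (π * n₃) r|
      ≤ 60 * (n₂ * n₃ * max (n₂ : ℝ) n₃) / a ^ 2 := by
  rcases le_total n₃ n₂ with h | h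
  · rw [max_eq_left (by exact_mod_cast h)]
    convert abs_integral_cos_nat_mul_pi_le_of_le ha h₃ h using 2
    ring
  · rw [max_eq_right (by exact_mod_cast h), sinMulSinDivSq_comm]
    convert abs_integral_cos_nat_mul_pi_le_of_le ha h₂ h using 2
    ring

theorem deriv_sinMulSinDivSq_le {b c r : ℝ} (hc : 0 < c) (hcb : c ≤ b) (hr : b * r = π / 2) :
    deriv (sinMulSinDivSq b c) r ≤ -((4 / π - 1) * c / r ^ 2) := by
  have hr₀ : 0 < r := pos_of_mul_pos_right (hr ▸ by positivity) (hc.le.trans hcb)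
  have hcr : 2 / π * (c * r) ≤ sin (c * r) :=
    mul_le_sin (by positivity) (hr ▸ by gcongr)
  have hφ := ((((hasDerivAt_id' r).const_mul b).sin).fun_mul
    (((hasDerivAt_id' r).const_mul c).sin)).fun_div (hasDerivAt_pow 2 r) (by positivity)
  have hval : deriv (sinMulSinDivSq b c) r = (c * cos (c * r) - 2 * sin (c * r) / r) / r ^ 2 := by
    unfold sinMulSinDivSq
    rw [hφ.deriv, hr, sin_pi_div_two, cos_pi_div_two]
    field_simp
    ring
  have hnum : c * cos (c * r) - 2 * sin (c * r) / r ≤ -((4 / π - 1) * c) := by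
    have h₁ : c * cos (c * r) ≤ c := mul_le_of_le_one_right hc.le (cos_le_one _)
    have h₂ : 4 / π * c ≤ 2 * sin (c * r) / r := by
      rw [le_div_iff₀ hr₀]
      linarith [show 4 / π * c * r = 2 * (2 / π * (c * r)) by ring]
    linarith
  rw [hval, neg_div']
  gcongr

theorem three_mul_sq_mul_le_abs_deriv {n₂ n₃ : ℕ} (h₃ : 1 ≤ n₃) (h : n₃ ≤ n₂) :
    3 * n₂ ^ 2 * n₃ ≤ |deriv (sinMulSinDivSq (π * n₂) (π * n₃)) (1 / (2 * n₂))| := by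
  have h₃' : (1 : ℝ) ≤ n₃ := by exact_mod_cast h₃
  have h' : (n₃ : ℝ) ≤ n₂ := by exact_mod_cast h
  have hn₂ : (n₂ : ℝ) ≠ 0 := by linarith
  have hd := deriv_sinMulSinDivSq_le (b := π * n₂) (c := π * n₃) (r := 1 / (2 * n₂))
    (by positivity) (by gcongr) (by field_simp)
  have hval : (4 / π - 1) * (π * n₃) / (1 / (2 * n₂)) ^ 2 = (16 - 4 * π) * n₂ ^ 2 * n₃ := by
    field_simp
    ring
  rw [hval] at hd
  have hπ := pi_lt_d2
  refine le_trans ?_ (neg_le_abs _)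
  nlinarith [mul_le_mul_of_nonneg_right hπ.le (by positivity : (0 : ℝ) ≤ n₂ ^ 2 * n₃)]

theorem mul_mul_max_le_of_abs_deriv_le {n₂ n₃ : ℕ} (h₂ : 1 ≤ n₂) (h₃ : 1 ≤ n₃) {M : ℝ}
    (hM : ∀ r ∈ Ioc (0 : ℝ) 1, |deriv (sinMulSinDivSq (π * n₂) (π * n₃)) r| ≤ M) :
    3 * (n₂ * n₃ * max (n₂ : ℝ) n₃) ≤ M := by
  wlog h : n₃ ≤ n₂ generalizing n₂ n₃
  · rw [sinMulSinDivSq_comm] at hM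
    rw [mul_comm (n₂ : ℝ), max_comm]
    exact this h₃ h₂ hM (by omega)
  have h₂' : (1 : ℝ) ≤ n₂ := by exact_mod_cast h₂
  have hr : 1 / (2 * (n₂ : ℝ)) ∈ Ioc (0 : ℝ) 1 :=
    ⟨by positivity, by rw [div_le_one (by positivity)]; linarith⟩
  rw [max_eq_left (by exact_mod_cast h)]
  calc _ = 3 * (n₂ : ℝ) ^ 2 * n₃ := by ring
    _ ≤ M := (three_mul_sq_mul_le_abs_deriv h₃ h).trans (hM _ hr)

theorem abs_integral_sin_mul_sin_mul_le {n n₁ n₂ n₃ : ℕ} (h : n₁ < n) (h₂ : 1 ≤ n₂)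
    (h₃ : 1 ≤ n₃) :
    |∫ r in (0 : ℝ)..1, sin (n * π * r) * sin (n₁ * π * r) * sinMulSinDivSq (π * n₂) (π * n₃) r|
      ≤ 60 * (n₂ * n₃ * max (n₂ : ℝ) n₃) / ((n : ℝ) - n₁) ^ 2 := by
  set φ := sinMulSinDivSq (π * n₂) (π * n₃)
  have hprod : ∀ r, sin (n * π * r) * sin (n₁ * π * r) * φ r
      = (cos (((n - n₁ : ℕ) : ℝ) * π * r) * φ r - cos (((n + n₁ : ℕ) : ℝ) * π * r) * φ r) / 2 := by
    intro r
    push_cast [h.le]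
    rw [show (n - n₁ : ℝ) * π * r = n * π * r - n₁ * π * r by ring,
      show (n + n₁ : ℝ) * π * r = n * π * r + n₁ * π * r by ring, cos_sub, cos_add]
    ring
  have hsub : (((n - n₁ : ℕ) : ℝ)) = n - n₁ := by push_cast [h.le]; ring
  have hpos : (0 : ℝ) < ((n - n₁ : ℕ) : ℝ) := by exact_mod_cast (by omega : 0 < n - n₁)
  have hle : ((n - n₁ : ℕ) : ℝ) ≤ ((n + n₁ : ℕ) : ℝ) := by exact_mod_cast (by omega)
  have hdiff := abs_integral_cos_nat_mul_pi_le (a := n - n₁) (by omega) h₂ h₃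
  have hsum := (abs_integral_cos_nat_mul_pi_le (a := n + n₁) (by omega) h₂ h₃).trans
    (by gcongr : _ ≤ 60 * (n₂ * n₃ * max (n₂ : ℝ) n₃) / ((n - n₁ : ℕ) : ℝ) ^ 2)
  simp_rw [hprod]
  rw [intervalIntegral.integral_div, integral_sub (intervalIntegrable_cos_mul_sinMulSinDivSq _ _ _)
    (intervalIntegrable_cos_mul_sinMulSinDivSq _ _ _), abs_div, abs_two, ← hsub]
  linarith [abs_sub (∫ r in (0 : ℝ)..1, cos (((n - n₁ : ℕ) : ℝ) * π * r) * φ r)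
    (∫ r in (0 : ℝ)..1, cos (((n + n₁ : ℕ) : ℝ) * π * r) * φ r)]

theorem mul_mul_max_le_of_lt_two_mul {n₂ n₃ N₂' N₃' : ℕ} (h₂ : n₂ < 2 * N₂') (h₃ : n₃ < 2 * N₃')
    (hN : N₃' ≤ N₂') : (n₂ : ℝ) * n₃ * max (n₂ : ℝ) n₃ ≤ 8 * N₂' ^ 2 * N₃' := by
  have h₂' : (n₂ : ℝ) ≤ 2 * N₂' := by exact_mod_cast h₂.le
  have h₃' : (n₃ : ℝ) ≤ 2 * N₃' := by exact_mod_cast h₃.le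
  have hN' : (N₃' : ℝ) ≤ N₂' := by exact_mod_cast hN
  calc (n₂ : ℝ) * n₃ * max (n₂ : ℝ) n₃ ≤ 2 * N₂' * (2 * N₃') * (2 * N₂') := by
        gcongr
        exact max_le h₂' (by linarith)
    _ = 8 * N₂' ^ 2 * N₃' := by ring

theorem oscillatory_integral_bound :
    ∃ C > 0, ∀ n₂ n₃ : ℕ, 1 ≤ n₂ → 1 ≤ n₃ →
      let φ : ℝ → ℝ := fun r => Real.sin (Real.pi * n₂ * r) * Real.sin (Real.pi * n₃ * r) / r ^ 2
      (∀ M : ℝ, (∀ r ∈ Set.Ioc (0 : ℝ) 1, |deriv φ r| ≤ M) →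
        ∀ a : ℕ, 1 ≤ a →
          |∫ r in (0 : ℝ)..1, Real.cos (a * Real.pi * r) * φ r| ≤ C * M / (a : ℝ) ^ 2)
      ∧ (∀ N' N₁' N₂' N₃' n n₁ : ℕ,
          N' ≤ n → n < 2 * N' → n₁ ≤ N₁' → N₂' ≤ n₂ → n₂ < 2 * N₂' → N₃' ≤ n₃ → n₃ < 2 * N₃' →
          4 * N₁' < N' → N₃' ≤ N₂' →
          |∫ r in (0 : ℝ)..1, Real.sin (n * Real.pi * r) * Real.sin (n₁ * Real.pi * r) * φ r|
            ≤ C * (N₂' : ℝ) ^ 2 * (N₃' : ℝ) / (N' : ℝ) ^ 2) := by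
  refine ⟨1000, by norm_num, fun n₂ n₃ h₂ h₃ => ⟨fun M hM a ha => ?_, ?_⟩⟩
  · calc _ ≤ 60 * (n₂ * n₃ * max (n₂ : ℝ) n₃) / a ^ 2 := abs_integral_cos_nat_mul_pi_le ha h₂ h₃
      _ ≤ 1000 * M / a ^ 2 := by
        gcongr ?_ / _
        linarith [mul_mul_max_le_of_abs_deriv_le h₂ h₃ hM, (by positivity :
          (0 : ℝ) ≤ n₂ * n₃ * max (n₂ : ℝ) n₃)]
  · intro N' N₁' N₂' N₃' n n₁ hn _ hn₁ _ hN₂ _ hN₃ hN₁ hN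
    have hP := mul_mul_max_le_of_lt_two_mul hN₂ hN₃ hN
    have hgap : 3 * (N' : ℝ) ≤ 4 * ((n : ℝ) - n₁) := by
      have : (3 * N' + 4 * n₁ : ℝ) ≤ 4 * n := by
        exact_mod_cast (by omega : 3 * N' + 4 * n₁ ≤ 4 * n)
      linarith
    have hN' : (0 : ℝ) < N' := by exact_mod_cast (by omega : 0 < N')
    calc _ ≤ 60 * (n₂ * n₃ * max (n₂ : ℝ) n₃) / ((n : ℝ) - n₁) ^ 2 :=
          abs_integral_sin_mul_sin_mul_le (by omega) h₂ h₃
      _ ≤ 1000 * (N₂' : ℝ) ^ 2 * N₃' / N' ^ 2 := by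
        rw [div_le_div_iff₀ (by nlinarith) (by positivity)]
        nlinarith [mul_le_mul hP (pow_le_pow_left₀ (by positivity) hgap 2) (by positivity)
          (by positivity), mul_nonneg (by positivity : (0 : ℝ) ≤ N₂' ^ 2 * N₃')
          (sq_nonneg ((n : ℝ) - n₁))]
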